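/- Let X and Y be complex Banach spaces. Suppose there exists a bounded linear operator ℛ : L²(𝕋, X) → L²(𝕋, X) such that for every φ ∈ L²(𝕋, X) and every k ∈ ℤ, the Fourier coefficient (ℛφ)^(k) equals φ̂(k) if k ≥ 0 and equals 0 if k < 0. Let V : X → Y be a compact linear operator. Then there exists a function η : [0,∞) → [0,∞) with lim_{δ→0} η(δ) = η(0) = 0 such that ‖V∘(φ − ℛφ)‖_{L²(𝕋,Y)} ≤ η(‖V∘φ‖_{L²(𝕋,Y)}) for all φ ∈ L²(𝕋, X) with ‖φ‖_{L²(𝕋,X)} ≤ 2, where V∘ψ denotes the pointwise composition t ↦ V(ψ(t)). -/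

import Mathlib

open MeasureTheory Filter Topology

/-- Normalized Lebesgue measure `dt/2π` on `[0, 2π)`, modelling the unit circle `𝕋`. -/
noncomputable def circleMeas : Measure ℝ :=
  (ENNReal.ofReal (2 * Real.pi))⁻¹ • (volume.restrict (Set.Ioc (0:ℝ) (2 * Real.pi)))

/-- The `k`-th Fourier coefficient `φ̂(k) = ∫₀^{2π} φ(e^{it}) e^{-ikt} dt/2π` of
`φ ∈ L²(𝕋, X)`. -/
noncomputable def fourierCoefL2 {X : Type*} [NormedAddCommGroup X] [NormedSpace ℂ X]
    (φ : Lp X 2 circleMeas) (k : ℤ) : X :=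
  ∫ t, Complex.exp (-(Complex.I * k * t)) • φ t ∂circleMeas

/-!
Compactness of `V` yields finitely many functionals `w₁, …, w_m` of norm at most one with
`‖V x‖ ≤ ∑ |wᵢ (V x)| + ε ‖x‖`. For the scalar functions `wᵢ ∘ V ∘ φ`, passing from `φ` to
`φ - ℛ φ` only deletes the Fourier coefficients of index `k ≥ 0`, so by Parseval
`‖wᵢ ∘ V ∘ (φ - ℛ φ)‖ ≤ ‖wᵢ ∘ V ∘ φ‖ ≤ ‖V ∘ φ‖`. Taking `L²` norms in the pointwise bound gives
`‖V ∘ (φ - ℛ φ)‖ ≤ m ‖V ∘ φ‖ + ε (2 + 2 ‖ℛ‖)` for `‖φ‖ ≤ 2`, and `η s = inf_ε (m_ε s + ε)` is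
the required modulus.
-/

namespace MeasureTheory.Lp

variable {α E : Type*} {m : MeasurableSpace α} {μ : Measure α} [NormedAddCommGroup E]

theorem norm_sq_eq_integral_norm_sq (f : Lp E 2 μ) : ‖f‖ ^ 2 = ∫ t, ‖f t‖ ^ 2 ∂μ := by
  rw [Lp.norm_def, (Lp.memLp f).eLpNorm_eq_integral_rpow_norm two_ne_zero ENNReal.ofNat_ne_top,
    ENNReal.toReal_ofReal (by positivity), ENNReal.toReal_ofNat, ← Real.rpow_natCast,
    ← Real.rpow_mul (integral_nonneg fun t => by positivity)]
  norm_num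

theorem norm_le_sum_add_of_ae_le {p : ENNReal} [Fact (1 ≤ p)] {F G ι : Type*}
    [NormedAddCommGroup F] [NormedAddCommGroup G] (s : Finset ι) {f : Lp E p μ}
    {g : ι → Lp F p μ} {h : Lp G p μ} {c : ℝ} (hc : 0 ≤ c)
    (hfgh : ∀ᵐ t ∂μ, ‖f t‖ ≤ ∑ i ∈ s, ‖g i t‖ + c * ‖h t‖) :
    ‖f‖ ≤ ∑ i ∈ s, ‖g i‖ + c * ‖h‖ := by
  rw [Lp.norm_def]
  refine ENNReal.toReal_le_of_le_ofReal (by positivity) ?_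
  calc eLpNorm f p μ
      ≤ eLpNorm ((∑ i ∈ s, fun t => ‖g i t‖) + c • fun t => ‖h t‖) p μ := by
        refine eLpNorm_mono_ae_real ?_
        filter_upwards [hfgh] with t ht
        simpa using ht
    _ ≤ ∑ i ∈ s, eLpNorm (fun t => ‖g i t‖) p μ + ‖c‖ₑ * eLpNorm (fun t => ‖h t‖) p μ := by
        refine (eLpNorm_add_le ?_ ?_ Fact.out).trans ?_
        · exact Finset.aestronglyMeasurable_sum _ fun i _ => (Lp.aestronglyMeasurable (g i)).norm
        · exact (Lp.aestronglyMeasurable h).norm.const_smul c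
        rw [eLpNorm_const_smul]
        gcongr
        exact eLpNorm_sum_le (fun i _ => (Lp.aestronglyMeasurable (g i)).norm) Fact.out
    _ = ENNReal.ofReal (∑ i ∈ s, ‖g i‖ + c * ‖h‖) := by
        simp only [eLpNorm_norm, ← Lp.enorm_def, ← ofReal_norm]
        rw [ENNReal.ofReal_add (by positivity) (by positivity),
          ENNReal.ofReal_sum_of_nonneg fun i _ => norm_nonneg _, ENNReal.ofReal_mul hc,
          Real.norm_of_nonneg hc]

end MeasureTheory.Lp

theorem ContinuousLinearMap.norm_compLp_eq_sqrt_integral {𝕜 α E F : Type*}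
    [NontriviallyNormedField 𝕜] {m : MeasurableSpace α} {μ : Measure α} [NormedAddCommGroup E]
    [NormedSpace 𝕜 E] [NormedAddCommGroup F] [NormedSpace 𝕜 F] (V : E →L[𝕜] F)
    (ψ : Lp E 2 μ) : ‖V.compLp ψ‖ = √(∫ t, ‖V (ψ t)‖ ^ 2 ∂μ) := by
  rw [← Real.sqrt_sq (norm_nonneg _), Lp.norm_sq_eq_integral_norm_sq]
  congr 1
  exact integral_congr_ae (by filter_upwards [V.coeFn_compLp ψ] with t ht; rw [ht])

theorem le_mul_norm_of_forall_norm_le_one {𝕜 E : Type*} [RCLike 𝕜] [NormedAddCommGroup E]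
    [NormedSpace 𝕜 E] {f : E → ℝ} (hf : ∀ (c : 𝕜) x, f (c • x) = ‖c‖ * f x) {ε : ℝ}
    (h : ∀ x, ‖x‖ ≤ 1 → f x ≤ ε) (x : E) : f x ≤ ε * ‖x‖ := by
  rcases eq_or_ne x 0 with rfl | hx
  · simpa using (hf 0 0).le
  have hx' : (‖x‖ : 𝕜) ≠ 0 := RCLike.ofReal_ne_zero.2 (norm_ne_zero_iff.2 hx)
  calc f x = f ((‖x‖ : 𝕜) • (‖x‖ : 𝕜)⁻¹ • x) := by rw [smul_inv_smul₀ hx']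
    _ = ‖x‖ * f ((‖x‖ : 𝕜)⁻¹ • x) := by rw [hf, RCLike.norm_ofReal, abs_norm]
    _ ≤ ‖x‖ * ε := by
        gcongr
        refine h _ (le_of_eq ?_)
        rw [norm_smul, norm_inv, RCLike.norm_ofReal, abs_norm,
          inv_mul_cancel₀ (norm_ne_zero_iff.2 hx)]
    _ = ε * ‖x‖ := mul_comm _ _

/-- The `w` are norming functionals of the centres of a finite `ε / 2`-net of the image under `V`
of the closed unit ball. -/
theorem IsCompactOperator.exists_finset_dual_norm_le_sum_add {𝕜 X Y : Type*} [RCLike 𝕜]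
    [NormedAddCommGroup X] [NormedSpace 𝕜 X] [NormedAddCommGroup Y] [NormedSpace 𝕜 Y]
    {V : X →L[𝕜] Y} (hV : IsCompactOperator V) {ε : ℝ} (hε : 0 < ε) :
    ∃ s : Finset (StrongDual 𝕜 Y), (∀ w ∈ s, ‖w‖ ≤ 1) ∧
      ∀ x, ‖V x‖ ≤ ∑ w ∈ s, ‖w (V x)‖ + ε * ‖x‖ := by
  classical
  choose w hw_norm hw_apply using exists_dual_vector'' 𝕜 (E := Y)
  obtain ⟨t, -, hcover⟩ := (hV.isCompact_closure_image_closedBall 1).elim_nhds_subcover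
    (fun y => Metric.ball y (ε / 2)) fun y _ => Metric.ball_mem_nhds y (half_pos hε)
  refine ⟨t.image w, by simpa using fun y _ => hw_norm y, fun x => ?_⟩
  suffices h : ∀ x, ‖x‖ ≤ 1 → ‖V x‖ - ∑ v ∈ t.image w, ‖v (V x)‖ ≤ ε by
    have := le_mul_norm_of_forall_norm_le_one (𝕜 := 𝕜)
      (f := fun x => ‖V x‖ - ∑ v ∈ t.image w, ‖v (V x)‖)
      (fun c x => by simp [norm_smul, Finset.mul_sum, mul_sub]) h x
    linarith
  intro x hx
  obtain ⟨y, hy, hxy⟩ : ∃ y ∈ t, dist (V x) y < ε / 2 := by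
    simpa using hcover (subset_closure ⟨x, by simpa using hx, rfl⟩)
  have hy_le : ‖y‖ ≤ ‖w y (V x)‖ + ε / 2 :=
    calc ‖y‖ = ‖w y (V x) + w y (y - V x)‖ := by
          rw [← map_add, add_sub_cancel, hw_apply, RCLike.norm_ofReal, abs_norm]
      _ ≤ ‖w y (V x)‖ + 1 * ‖y - V x‖ :=
          (norm_add_le _ _).trans (by gcongr; exact (w y).le_of_opNorm_le (hw_norm y) _)
      _ ≤ ‖w y (V x)‖ + ε / 2 := by rw [one_mul, ← dist_eq_norm, dist_comm]; linarith
  have hsum : ‖w y (V x)‖ ≤ ∑ v ∈ t.image w, ‖v (V x)‖ :=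
    Finset.single_le_sum (f := fun v : StrongDual 𝕜 Y => ‖v (V x)‖) (fun _ _ => norm_nonneg _)
      (Finset.mem_image_of_mem w hy)
  have hVx := norm_le_norm_add_norm_sub' (V x) y
  rw [← dist_eq_norm] at hVx
  linarith

theorem exists_modulus_of_forall_le_mul_add {α : Type*} {S : Set α} {f g : α → ℝ}
    (h : ∀ ε > 0, ∃ C, 0 ≤ C ∧ ∀ x ∈ S, f x ≤ C * g x + ε) :
    ∃ η : ℝ → ℝ, η 0 = 0 ∧ (∀ s, 0 ≤ η s) ∧ Tendsto η (𝓝[≥] 0) (𝓝 0) ∧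
      ∀ x ∈ S, f x ≤ η (g x) := by
  choose C hC_nonneg hC using fun n : ℕ => h (1 / (n + 1)) Nat.one_div_pos_of_nat
  -- `|s|` rather than `s`, so that `η` is nonnegative on all of `ℝ`
  set η : ℝ → ℝ := fun s => ⨅ n, (C n * |s| + 1 / (n + 1))
  have hbdd : ∀ s, BddBelow (Set.range fun n => C n * |s| + 1 / ((n : ℝ) + 1)) :=
    fun s => ⟨0, by rintro _ ⟨n, rfl⟩; have := hC_nonneg n; positivity⟩
  have hη_le : ∀ s n, η s ≤ C n * |s| + 1 / (n + 1) := fun s n => ciInf_le (hbdd s) n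
  have hη_nonneg : ∀ s, 0 ≤ η s := fun s => le_ciInf fun n => by
    have := hC_nonneg n; positivity
  have hη_zero : η 0 = 0 := le_antisymm
    (ge_of_tendsto' tendsto_one_div_add_atTop_nhds_zero_nat fun n => by simpa using hη_le 0 n)
    (hη_nonneg 0)
  have hη_tendsto : Tendsto η (𝓝 0) (𝓝 0) := by
    refine tendsto_order.2 ⟨fun a ha => .of_forall fun s => ha.trans_le (hη_nonneg s),
      fun a ha => ?_⟩
    obtain ⟨n, hn⟩ := exists_nat_one_div_lt ha
    have hcont : Tendsto (fun s : ℝ => C n * |s| + 1 / (n + 1)) (𝓝 0) (𝓝 (1 / (n + 1))) := by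
      simpa using ((continuous_abs.tendsto (0 : ℝ)).const_mul (C n)).add_const (1 / ((n : ℝ) + 1))
    filter_upwards [hcont.eventually (gt_mem_nhds hn)] with s hs using (hη_le s n).trans_lt hs
  refine ⟨η, hη_zero, hη_nonneg, hη_tendsto.mono_left nhdsWithin_le_nhds,
    fun x hx => le_ciInf fun n => (hC n x hx).trans ?_⟩
  gcongr
  · exact hC_nonneg n
  · exact le_abs_self _

instance isFiniteMeasure_circleMeas : IsFiniteMeasure circleMeas :=
  Measure.smul_finite _ (ENNReal.inv_ne_top.2 (by positivity))

theorem integral_circleMeas {E : Type*} [NormedAddCommGroup E] [NormedSpace ℝ E] (g : ℝ → E) :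
    ∫ t, g t ∂circleMeas = (2 * Real.pi)⁻¹ • ∫ t in 0..2 * Real.pi, g t := by
  rw [circleMeas, integral_smul_measure, intervalIntegral.integral_of_le Real.two_pi_pos.le,
    ENNReal.toReal_inv, ENNReal.toReal_ofReal Real.two_pi_pos.le]

theorem MeasureTheory.MemLp.restrict_Ioc_of_circleMeas {E : Type*} [NormedAddCommGroup E]
    {p : ENNReal} {f : ℝ → E} (hf : MemLp f p circleMeas) :
    MemLp f p (volume.restrict (Set.Ioc 0 (2 * Real.pi))) := by
  refine hf.of_measure_le_smul (ENNReal.ofReal_ne_top (r := 2 * Real.pi)) (le_of_eq ?_)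
  rw [circleMeas, smul_smul, ENNReal.mul_inv_cancel (by positivity) ENNReal.ofReal_ne_top,
    one_smul]

section FourierCoefficients

variable {X : Type*} [NormedAddCommGroup X] [NormedSpace ℂ X]

theorem fourierCoefL2_eq_fourierCoeffOn (f : Lp X 2 circleMeas) (k : ℤ) :
    fourierCoefL2 f k = fourierCoeffOn Real.two_pi_pos f k := by
  rw [fourierCoefL2, integral_circleMeas, fourierCoeffOn_eq_integral, sub_zero, one_div]
  congr 1
  refine intervalIntegral.integral_congr fun t _ => ?_
  simp only [fourier_coe_apply]
  congr 2
  field_simp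
  push_cast
  ring

theorem integrable_cexp_smul_coeFn (φ : Lp X 2 circleMeas) (k : ℤ) :
    Integrable (fun t : ℝ => Complex.exp (-(Complex.I * k * t)) • φ t) circleMeas := by
  refine ((Lp.memLp φ).integrable one_le_two).bdd_smul 1
    (by fun_prop : Continuous fun t : ℝ => Complex.exp (-(Complex.I * k * t))).aestronglyMeasurable
    (ae_of_all _ fun t => ?_)
  rw [Complex.norm_exp]
  simp

theorem fourierCoefL2_sub (φ ψ : Lp X 2 circleMeas) (k : ℤ) :
    fourierCoefL2 (φ - ψ) k = fourierCoefL2 φ k - fourierCoefL2 ψ k := by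
  rw [fourierCoefL2, fourierCoefL2, fourierCoefL2,
    ← integral_sub (integrable_cexp_smul_coeFn φ k) (integrable_cexp_smul_coeFn ψ k)]
  refine integral_congr_ae ?_
  filter_upwards [Lp.coeFn_sub φ ψ] with t ht
  rw [ht, Pi.sub_apply, smul_sub]

theorem fourierCoefL2_compLp [CompleteSpace X] {Z : Type*} [NormedAddCommGroup Z]
    [NormedSpace ℂ Z] [CompleteSpace Z] (W : X →L[ℂ] Z) (φ : Lp X 2 circleMeas) (k : ℤ) :
    fourierCoefL2 (W.compLp φ) k = W (fourierCoefL2 φ k) := by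
  rw [fourierCoefL2, fourierCoefL2, ← W.integral_comp_comm (integrable_cexp_smul_coeFn φ k)]
  refine integral_congr_ae ?_
  filter_upwards [W.coeFn_compLp φ] with t ht
  rw [ht, W.map_smul]

end FourierCoefficients

theorem hasSum_sq_fourierCoefL2 (f : Lp ℂ 2 circleMeas) :
    HasSum (fun k => ‖fourierCoefL2 f k‖ ^ 2) (‖f‖ ^ 2) := by
  simp_rw [fourierCoefL2_eq_fourierCoeffOn]
  convert hasSum_sq_fourierCoeffOn Real.two_pi_pos (Lp.memLp f).restrict_Ioc_of_circleMeas
  rw [Lp.norm_sq_eq_integral_norm_sq, integral_circleMeas, sub_zero]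

theorem norm_le_norm_of_forall_norm_fourierCoefL2_le {f g : Lp ℂ 2 circleMeas}
    (h : ∀ k, ‖fourierCoefL2 f k‖ ≤ ‖fourierCoefL2 g k‖) : ‖f‖ ≤ ‖g‖ :=
  (pow_le_pow_iff_left₀ (norm_nonneg f) (norm_nonneg g) two_ne_zero).1 <|
    hasSum_le (fun k => pow_le_pow_left₀ (norm_nonneg _) (h k) 2)
      (hasSum_sq_fourierCoefL2 f) (hasSum_sq_fourierCoefL2 g)

def IsRieszProjection {X : Type*} [NormedAddCommGroup X] [NormedSpace ℂ X]
    (R : Lp X 2 circleMeas → Lp X 2 circleMeas) : Prop :=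
  ∀ φ k, fourierCoefL2 (R φ) k = if 0 ≤ k then fourierCoefL2 φ k else 0

namespace IsRieszProjection

variable {X : Type*} [NormedAddCommGroup X] [NormedSpace ℂ X] [CompleteSpace X]
  {R : Lp X 2 circleMeas → Lp X 2 circleMeas}

theorem norm_compLp_sub_le (hR : IsRieszProjection R) (W : X →L[ℂ] ℂ)
    (φ : Lp X 2 circleMeas) : ‖W.compLp (φ - R φ)‖ ≤ ‖W.compLp φ‖ :=
  norm_le_norm_of_forall_norm_fourierCoefL2_le fun k => by
    rw [fourierCoefL2_compLp, fourierCoefL2_sub, hR, fourierCoefL2_compLp]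
    split_ifs <;> simp

theorem exists_norm_compLp_sub_le {Y : Type*} [NormedAddCommGroup Y] [NormedSpace ℂ Y]
    (hR : IsRieszProjection R) {V : X →L[ℂ] Y} (hV : IsCompactOperator V) {ε : ℝ}
    (hε : 0 < ε) :
    ∃ C, 0 ≤ C ∧ ∀ φ, ‖V.compLp (φ - R φ)‖ ≤ C * ‖V.compLp φ‖ + ε * ‖φ - R φ‖ := by
  obtain ⟨s, hs_norm, hV_le⟩ := hV.exists_finset_dual_norm_le_sum_add hε
  refine ⟨s.card, by positivity, fun φ => ?_⟩
  have h_split : ‖V.compLp (φ - R φ)‖ ≤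
      ∑ w ∈ s, ‖(w.comp V).compLp (φ - R φ)‖ + ε * ‖φ - R φ‖ := by
    refine Lp.norm_le_sum_add_of_ae_le s hε.le ?_
    filter_upwards [V.coeFn_compLp (φ - R φ),
      (eventually_all_finset s).2 fun w _ => (w.comp V).coeFn_compLp (φ - R φ)] with t hVt hwt
    rw [hVt, Finset.sum_congr rfl fun w hw => by rw [hwt w hw]]
    exact hV_le _
  have h_scalar : ∀ w ∈ s, ‖(w.comp V).compLp (φ - R φ)‖ ≤ ‖V.compLp φ‖ := fun w hw =>
    (hR.norm_compLp_sub_le _ φ).trans <| Lp.norm_le_norm_of_ae_le <| by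
      filter_upwards [(w.comp V).coeFn_compLp φ, V.coeFn_compLp φ] with t hwt hVt
      rw [hwt, hVt]
      simpa using w.le_of_opNorm_le (hs_norm w hw) (V (φ t))
  calc ‖V.compLp (φ - R φ)‖
      ≤ ∑ w ∈ s, ‖(w.comp V).compLp (φ - R φ)‖ + ε * ‖φ - R φ‖ := h_split
    _ ≤ s.card * ‖V.compLp φ‖ + ε * ‖φ - R φ‖ := by
        rw [← nsmul_eq_mul]
        gcongr
        exact Finset.sum_le_card_nsmul _ _ _ h_scalar

end IsRieszProjection

theorem stmt7_general {X Y : Type*} [NormedAddCommGroup X] [NormedSpace ℂ X] [CompleteSpace X]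
    [NormedAddCommGroup Y] [NormedSpace ℂ Y]
    (R : Lp X 2 circleMeas →L[ℂ] Lp X 2 circleMeas)
    (hR : ∀ (φ : Lp X 2 circleMeas) (k : ℤ),
      fourierCoefL2 (R φ) k = if 0 ≤ k then fourierCoefL2 φ k else 0)
    (V : X →L[ℂ] Y) (hV : IsCompactOperator V) :
    ∃ η : ℝ → ℝ, η 0 = 0 ∧ (∀ s : ℝ, 0 ≤ η s) ∧
      Tendsto η (nhdsWithin 0 (Set.Ici 0)) (𝓝 0) ∧
      ∀ φ : Lp X 2 circleMeas, ‖φ‖ ≤ 2 →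
        Real.sqrt (∫ t, ‖V (φ t) - V (R φ t)‖ ^ 2 ∂circleMeas) ≤
          η (Real.sqrt (∫ t, ‖V (φ t)‖ ^ 2 ∂circleMeas)) := by
  have hK : 0 < 2 + 2 * ‖R‖ := by positivity
  obtain ⟨η, hη_zero, hη_nonneg, hη_tendsto, hη⟩ :=
    exists_modulus_of_forall_le_mul_add (S := {φ | ‖φ‖ ≤ 2})
      (f := fun φ => ‖V.compLp (φ - R φ)‖) (g := fun φ => ‖V.compLp φ‖) fun ε hε => by
        obtain ⟨C, hC_nonneg, hC⟩ :=
          IsRieszProjection.exists_norm_compLp_sub_le hR hV (div_pos hε hK)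
        refine ⟨C, hC_nonneg, fun φ (hφ : ‖φ‖ ≤ 2) => (hC φ).trans ?_⟩
        have hψ : ‖φ - R φ‖ ≤ 2 + 2 * ‖R‖ := (norm_sub_le _ _).trans <| by
          nlinarith [R.le_opNorm φ, norm_nonneg R]
        grw [hψ, div_mul_cancel₀ ε hK.ne']
  refine ⟨η, hη_zero, hη_nonneg, hη_tendsto, fun φ hφ => ?_⟩
  have h_sub : ∫ t, ‖V (φ t) - V (R φ t)‖ ^ 2 ∂circleMeas =
      ∫ t, ‖V ((φ - R φ) t)‖ ^ 2 ∂circleMeas :=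
    integral_congr_ae <| by
      filter_upwards [Lp.coeFn_sub φ (R φ)] with t ht
      rw [ht, Pi.sub_apply, map_sub]
  rw [h_sub, ← V.norm_compLp_eq_sqrt_integral, ← V.norm_compLp_eq_sqrt_integral]
  exact hη φ hφ

theorem stmt7 {X Y : Type*} [NormedAddCommGroup X] [NormedSpace ℂ X] [CompleteSpace X]
    [NormedAddCommGroup Y] [NormedSpace ℂ Y] [CompleteSpace Y]
    (R : Lp X 2 circleMeas →L[ℂ] Lp X 2 circleMeas)
    (hR : ∀ (φ : Lp X 2 circleMeas) (k : ℤ),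
      fourierCoefL2 (R φ) k = if 0 ≤ k then fourierCoefL2 φ k else 0)
    (V : X →L[ℂ] Y) (hV : IsCompactOperator V) :
    ∃ η : ℝ → ℝ, η 0 = 0 ∧ (∀ s : ℝ, 0 ≤ η s) ∧
      Tendsto η (nhdsWithin 0 (Set.Ici 0)) (𝓝 0) ∧
      ∀ φ : Lp X 2 circleMeas, ‖φ‖ ≤ 2 →
        Real.sqrt (∫ t, ‖V (φ t) - V (R φ t)‖ ^ 2 ∂circleMeas) ≤
          η (Real.sqrt (∫ t, ‖V (φ t)‖ ^ 2 ∂circleMeas)) :=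
  stmt7_general R hR V hV
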